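/- arXiv:1904.11197 — 8 statements merged into one kernel-verified Lean document; each statement's English description precedes it below -/
import Mathlib

section
/- Let {π₁,...,πₙ} (n ≥ 2) be a (k,k-t)-SCID, S = span(π₁,...,πₙ) and I = span of all pairwise intersections πᵢ ∩ πⱼ for i < j. Then dim S + dim I ≤ n·k. -/
/-!
Add the subspaces one at a time. Adjoining `π a` to a family with span `S` and pairwise-intersection
span `I` raises the span to `π a ⊔ S` and the intersection span to at most `I ⊔ (π a ⊓ S)`; by
Grassmann's formula the first grows by `dim π a - dim (π a ⊓ S)` and the second by at most
`dim (π a ⊓ S)`, so the sum `dim S + dim I` grows by at most `dim π a`.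
-/

open Module

section PairwiseInfSup

variable {ι α : Type*} [Preorder ι] [CompleteLattice α]

def Finset.pairwiseInfSup (s : Finset ι) (f : ι → α) : α :=
  ⨆ i ∈ s, ⨆ j ∈ s, ⨆ (_ : i < j), f i ⊓ f j

@[simp]
theorem Finset.pairwiseInfSup_empty (f : ι → α) : (∅ : Finset ι).pairwiseInfSup f = ⊥ := by
  simp [Finset.pairwiseInfSup]

theorem Finset.pairwiseInfSup_univ [Fintype ι] (f : ι → α) :
    Finset.univ.pairwiseInfSup f = ⨆ i, ⨆ j, ⨆ (_ : i < j), f i ⊓ f j := by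
  simp [Finset.pairwiseInfSup]

theorem Finset.pairwiseInfSup_insert_le [DecidableEq ι] (a : ι) (s : Finset ι) (f : ι → α) :
    (insert a s).pairwiseInfSup f ≤ s.pairwiseInfSup f ⊔ (f a ⊓ ⨆ i ∈ s, f i) := by
  refine iSup₂_le fun i hi => iSup₂_le fun j hj => iSup_le fun hij => ?_
  rcases Finset.mem_insert.mp hi with rfl | hi' <;> rcases Finset.mem_insert.mp hj with rfl | hj'
  · exact absurd hij (lt_irrefl _)
  · exact le_sup_of_le_right (inf_le_inf_left _ (le_iSup₂_of_le j hj' le_rfl))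
  · exact le_sup_of_le_right (inf_comm (f i) _ ▸ inf_le_inf_left _ (le_iSup₂_of_le i hi' le_rfl))
  · exact le_sup_of_le_left (le_iSup₂_of_le i hi' (le_iSup₂_of_le j hj' (le_iSup_of_le hij le_rfl)))

end PairwiseInfSup

theorem Submodule.finrank_biSup_add_finrank_pairwiseInfSup_le_sum {K V ι : Type*} [DivisionRing K]
    [AddCommGroup V] [Module K V] [FiniteDimensional K V] [Preorder ι] [DecidableEq ι]
    (s : Finset ι) (p : ι → Submodule K V) :
    finrank K ↥(⨆ i ∈ s, p i) + finrank K ↥(s.pairwiseInfSup p) ≤ ∑ i ∈ s, finrank K ↥(p i) := by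
  induction s using Finset.induction_on with
  | empty => rw [Finset.pairwiseInfSup_empty]; simp
  | insert a s ha ih =>
    rw [Finset.iSup_insert, Finset.sum_insert ha]
    set S := ⨆ i ∈ s, p i
    set I := s.pairwiseInfSup p
    have grassmann_S := finrank_sup_add_finrank_inf_eq (p a) S
    have grassmann_I := finrank_sup_add_finrank_inf_eq I (p a ⊓ S)
    have hI : finrank K ↥((insert a s).pairwiseInfSup p) ≤ finrank K ↥(I ⊔ (p a ⊓ S)) :=
      finrank_mono (Finset.pairwiseInfSup_insert_le a s p)
    omega

theorem dim_span_add_dim_int_le_nk_general (F V : Type*) [Field F]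
    [AddCommGroup V] [Module F V] [FiniteDimensional F V]
    (n k : ℕ)
    (π : Fin n → Submodule F V)
    (hdim : ∀ i, finrank F ↥(π i) = k) :
    finrank F ↥(⨆ i, π i) +
      finrank F ↥(⨆ i, ⨆ j, ⨆ (_ : i < j), π i ⊓ π j) ≤ n * k := by
  have bound := Submodule.finrank_biSup_add_finrank_pairwiseInfSup_le_sum Finset.univ π
  have hS : ⨆ i ∈ Finset.univ, π i = ⨆ i, π i := by simp
  rw [Finset.pairwiseInfSup_univ, hS] at bound
  simpa [hdim] using bound

theorem dim_span_add_dim_int_le_nk (F V : Type*) [Field F] [Fintype F]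
    [AddCommGroup V] [Module F V] [FiniteDimensional F V]
    (n k t : ℕ) (hn : 2 ≤ n) (ht : t ≤ k)
    (π : Fin n → Submodule F V) (hinj : Function.Injective π)
    (hdim : ∀ i, finrank F ↥(π i) = k)
    (hint : ∀ i j, i ≠ j → finrank F ↥(π i ⊓ π j) = k - t) :
    finrank F ↥(⨆ i, π i) +
      finrank F ↥(⨆ i, ⨆ j, ⨆ (_ : i < j), π i ⊓ π j) ≤ n * k :=
  dim_span_add_dim_int_le_nk_general F V n k π hdim
end

section
/- Let {π₁,π₂,π₃} be a (k,k-t)-SCID, S = ⟨π₁,π₂,π₃⟩ and I = ⟨π₁∩π₂, π₁∩π₃, π₂∩π₃⟩. Then dim S + dim I ≤ 2(k+t). -/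
/-! Grassmann's formula turns the inclusions `(π₁ ⊓ π₃) ⊔ (π₂ ⊓ π₃) ≤ (π₁ ⊔ π₂) ⊓ π₃` and
`(π₁ ⊓ π₃) ⊓ (π₂ ⊓ π₃) ≤ ((π₁ ⊓ π₂) ⊔ (π₁ ⊓ π₃)) ⊓ (π₂ ⊓ π₃)` into upper bounds for `dim S` and
`dim I`. Adding them, the dimension of `(π₁ ⊓ π₃) ⊔ (π₂ ⊓ π₃)` cancels by Grassmann once more, and
for any three subspaces
`dim S + dim I + dim (π₁ ⊓ π₂) + dim (π₁ ⊓ π₃) ≤ 2 dim π₁ + dim π₂ + dim π₃`. -/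

open Module

namespace Submodule

variable {K V : Type*} [DivisionRing K] [AddCommGroup V] [Module K V] [FiniteDimensional K V]

theorem finrank_sup_add_finrank_le_of_le_inf {X Y W : Submodule K V} (hW : W ≤ X ⊓ Y) :
    finrank K ↥(X ⊔ Y) + finrank K ↥W ≤ finrank K ↥X + finrank K ↥Y :=
  finrank_sup_add_finrank_inf_eq X Y ▸ Nat.add_le_add_left (finrank_mono hW) _

theorem finrank_sup_sup_add_finrank_inf_sup_le (U₁ U₂ U₃ : Submodule K V) :
    finrank K ↥(U₁ ⊔ U₂ ⊔ U₃) + finrank K ↥((U₁ ⊓ U₂) ⊔ (U₁ ⊓ U₃) ⊔ (U₂ ⊓ U₃)) +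
        finrank K ↥(U₁ ⊓ U₂) + finrank K ↥(U₁ ⊓ U₃) ≤
      2 * finrank K ↥U₁ + finrank K ↥U₂ + finrank K ↥U₃ := by
  have hS := finrank_sup_add_finrank_le_of_le_inf (X := U₁ ⊔ U₂) (Y := U₃)
    (W := (U₁ ⊓ U₃) ⊔ (U₂ ⊓ U₃))
    (sup_le (inf_le_inf_right _ le_sup_left) (inf_le_inf_right _ le_sup_right))
  have hI := finrank_sup_add_finrank_le_of_le_inf (X := (U₁ ⊓ U₂) ⊔ (U₁ ⊓ U₃)) (Y := U₂ ⊓ U₃)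
    (W := (U₁ ⊓ U₃) ⊓ (U₂ ⊓ U₃)) (inf_le_inf_right _ le_sup_right)
  have h₁₂ := finrank_sup_add_finrank_inf_eq U₁ U₂
  have h₁₃₂₃ := finrank_sup_add_finrank_inf_eq (U₁ ⊓ U₃) (U₂ ⊓ U₃)
  have hU₁ : finrank K ↥((U₁ ⊓ U₂) ⊔ (U₁ ⊓ U₃)) ≤ finrank K ↥U₁ :=
    finrank_mono (sup_le inf_le_left inf_le_left)
  omega

end Submodule

theorem scid_three_bound_general (F V : Type*) [Field F]
    [AddCommGroup V] [Module F V] [FiniteDimensional F V]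
    (k t : ℕ)
    (π₁ π₂ π₃ : Submodule F V)
    (hd₁ : finrank F ↥π₁ = k) (hd₂ : finrank F ↥π₂ = k) (hd₃ : finrank F ↥π₃ = k)
    (hi12 : finrank F ↥(π₁ ⊓ π₂) = k - t)
    (hi13 : finrank F ↥(π₁ ⊓ π₃) = k - t) :
    finrank F ↥(π₁ ⊔ π₂ ⊔ π₃) +
      finrank F ↥((π₁ ⊓ π₂) ⊔ (π₁ ⊓ π₃) ⊔ (π₂ ⊓ π₃)) ≤ 2 * (k + t) := by
  have h := Submodule.finrank_sup_sup_add_finrank_inf_sup_le π₁ π₂ π₃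
  rw [hd₁, hd₂, hd₃, hi12, hi13] at h
  omega

theorem scid_three_bound (F V : Type*) [Field F] [Fintype F]
    [AddCommGroup V] [Module F V] [FiniteDimensional F V]
    (k t : ℕ) (ht : t ≤ k)
    (π₁ π₂ π₃ : Submodule F V) (h12 : π₁ ≠ π₂) (h13 : π₁ ≠ π₃) (h23 : π₂ ≠ π₃)
    (hd₁ : finrank F ↥π₁ = k) (hd₂ : finrank F ↥π₂ = k) (hd₃ : finrank F ↥π₃ = k)
    (hi12 : finrank F ↥(π₁ ⊓ π₂) = k - t)
    (hi13 : finrank F ↥(π₁ ⊓ π₃) = k - t)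
    (hi23 : finrank F ↥(π₂ ⊓ π₃) = k - t) :
    finrank F ↥(π₁ ⊔ π₂ ⊔ π₃) +
      finrank F ↥((π₁ ⊓ π₂) ⊔ (π₁ ⊓ π₃) ⊔ (π₂ ⊓ π₃)) ≤ 2 * (k + t) :=
  scid_three_bound_general F V k t π₁ π₂ π₃ hd₁ hd₂ hd₃ hi12 hi13
end

section
/- Let {π₁,π₂,π₃} be a (k,k-t)-SCID and let ε ≥ 0 be defined by dim(π₁∩π₂∩π₃) = k - t - ε. Then the span I of the three pairwise intersections has dim I = k - t + 2ε. -/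
/-! Write `A = π₁ ⊓ π₂`, `B = π₁ ⊓ π₃`, `C = π₂ ⊓ π₃`. Any two of them meet exactly in
`π₁ ⊓ π₂ ⊓ π₃`, and so does `A ⊔ B ≤ π₁` with `C`. Two applications of Grassmann's formula,
`dim (X ⊔ Y) + dim (X ⊓ Y) = dim X + dim Y`, then give
`dim I = 3 (k - t) - 2 dim (π₁ ⊓ π₂ ⊓ π₃) = k - t + 2ε`. -/

open Module

theorem inf_sup_inf_inf_inf {α : Type*} [Lattice α] (a b c : α) :
    (a ⊓ b ⊔ a ⊓ c) ⊓ (b ⊓ c) = a ⊓ b ⊓ c :=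
  le_antisymm
    (by rw [inf_assoc]; exact inf_le_inf_right _ (sup_le inf_le_left inf_le_left))
    (le_inf (inf_le_left.trans le_sup_left) (by rw [inf_assoc]; exact inf_le_right))

theorem Submodule.finrank_sup_inf_add_two_mul_finrank_inf {K V : Type*} [DivisionRing K]
    [AddCommGroup V] [Module K V] (p q r : Submodule K V) [FiniteDimensional K ↥(p ⊓ q)]
    [FiniteDimensional K ↥(p ⊓ r)] [FiniteDimensional K ↥(q ⊓ r)] :
    finrank K ↥(p ⊓ q ⊔ p ⊓ r ⊔ q ⊓ r) + 2 * finrank K ↥(p ⊓ q ⊓ r) =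
      finrank K ↥(p ⊓ q) + finrank K ↥(p ⊓ r) + finrank K ↥(q ⊓ r) := by
  have hpq_pr := finrank_sup_add_finrank_inf_eq (p ⊓ q) (p ⊓ r)
  have hsup_qr := finrank_sup_add_finrank_inf_eq (p ⊓ q ⊔ p ⊓ r) (q ⊓ r)
  rw [← inf_inf_distrib_left, ← inf_assoc] at hpq_pr
  rw [inf_sup_inf_inf_inf] at hsup_qr
  omega

theorem scid_three_dim_I_general (F V : Type*) [Field F]
    [AddCommGroup V] [Module F V] [FiniteDimensional F V]
    (k t ε : ℕ)
    (π₁ π₂ π₃ : Submodule F V)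
    (hi12 : finrank F ↥(π₁ ⊓ π₂) = k - t)
    (hi13 : finrank F ↥(π₁ ⊓ π₃) = k - t)
    (hi23 : finrank F ↥(π₂ ⊓ π₃) = k - t)
    (hε : finrank F ↥(π₁ ⊓ π₂ ⊓ π₃) + ε = k - t) :
    finrank F ↥((π₁ ⊓ π₂) ⊔ (π₁ ⊓ π₃) ⊔ (π₂ ⊓ π₃)) = k - t + 2 * ε := by
  have := Submodule.finrank_sup_inf_add_two_mul_finrank_inf π₁ π₂ π₃
  omega

theorem scid_three_dim_I (F V : Type*) [Field F] [Fintype F]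
    [AddCommGroup V] [Module F V] [FiniteDimensional F V]
    (k t ε : ℕ) (ht : t ≤ k)
    (π₁ π₂ π₃ : Submodule F V) (h12 : π₁ ≠ π₂) (h13 : π₁ ≠ π₃) (h23 : π₂ ≠ π₃)
    (hd₁ : finrank F ↥π₁ = k) (hd₂ : finrank F ↥π₂ = k) (hd₃ : finrank F ↥π₃ = k)
    (hi12 : finrank F ↥(π₁ ⊓ π₂) = k - t)
    (hi13 : finrank F ↥(π₁ ⊓ π₃) = k - t)
    (hi23 : finrank F ↥(π₂ ⊓ π₃) = k - t)
    (hε : finrank F ↥(π₁ ⊓ π₂ ⊓ π₃) + ε = k - t) :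
    finrank F ↥((π₁ ⊓ π₂) ⊔ (π₁ ⊓ π₃) ⊔ (π₂ ⊓ π₃)) = k - t + 2 * ε :=
  scid_three_dim_I_general F V k t ε π₁ π₂ π₃ hi12 hi13 hi23 hε
end

section
/- Let {π₁,...,πₙ} (n ≥ 3) be a (k,k-t)-SCID, S = span(π₁,...,πₙ) and I the span of all pairwise intersections. Then dim S + dim I ≤ (n-1)·k + 2t. -/
open Module

/-! Adding a subspace `P` to a family whose span is `A` and whose pairwise intersections span `B`
raises `dim A` by `dim P - dim (A ⊓ P)` and `dim B` by at most `dim (A ⊓ P)`, because all new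
intersections lie in `A ⊓ P`. Hence each new member raises `dim S + dim I` by at most its own
dimension. For three subspaces a direct count gives
`dim S + dim I + dim (π₀ ⊓ π₁ ⊓ π₂) ≤ dim π₀ + dim π₁ + dim π₂`, and
`dim (π₀ ⊓ π₁ ⊓ π₂) ≥ dim (π₀ ⊓ π₁) + dim (π₀ ⊓ π₂) - dim π₀ = k - 2t`. -/

section Lattice

variable {α : Type*} [CompleteLattice α]

def supPairwiseInf {ι : Type*} [LT ι] (f : ι → α) : α :=
  ⨆ i, ⨆ j, ⨆ (_ : i < j), f i ⊓ f j

theorem iSup_fin_succ_eq_iSup_castSucc_sup_last {n : ℕ} (f : Fin (n + 1) → α) :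
    ⨆ i, f i = (⨆ i : Fin n, f i.castSucc) ⊔ f (Fin.last n) := by
  refine le_antisymm (iSup_le fun i => ?_) (sup_le (iSup_le fun i => le_iSup f _) (le_iSup f _))
  induction i using Fin.lastCases with
  | last => exact le_sup_right
  | cast i => exact le_sup_of_le_left (le_iSup (fun i : Fin n => f i.castSucc) i)

theorem supPairwiseInf_fin_succ {n : ℕ} (f : Fin (n + 1) → α) :
    supPairwiseInf f = supPairwiseInf (fun i : Fin n => f i.castSucc) ⊔
      ⨆ i : Fin n, f i.castSucc ⊓ f (Fin.last n) := by
  refine le_antisymm (iSup₂_le fun i j => iSup_le fun hij => ?_) (sup_le ?_ ?_)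
  · induction j using Fin.lastCases with
    | last =>
      induction i using Fin.lastCases with
      | last => exact absurd hij (lt_irrefl _)
      | cast i => exact le_sup_of_le_right (le_iSup_of_le i le_rfl)
    | cast j =>
      induction i using Fin.lastCases with
      | last => exact absurd hij (Fin.castSucc_lt_last j).not_gt
      | cast i =>
        exact le_sup_of_le_left
          (le_iSup₂_of_le i j (le_iSup_of_le (Fin.castSucc_lt_castSucc_iff.1 hij) le_rfl))
  · exact iSup₂_le fun i j => iSup_le fun hij =>
      le_iSup₂_of_le _ _ (le_iSup_of_le (Fin.castSucc_lt_castSucc_iff.2 hij) le_rfl)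
  · exact iSup_le fun i => le_iSup₂_of_le _ _ (le_iSup_of_le (Fin.castSucc_lt_last i) le_rfl)

theorem supPairwiseInf_fin_three (f : Fin 3 → α) :
    supPairwiseInf f = f 0 ⊓ f 1 ⊔ f 0 ⊓ f 2 ⊔ f 1 ⊓ f 2 := by
  simp [supPairwiseInf]

end Lattice

namespace Submodule

variable {F V : Type*} [Field F] [AddCommGroup V] [Module F V] [FiniteDimensional F V]

theorem finrank_inf_add_finrank_inf_le (A B C : Submodule F V) :
    finrank F ↥(A ⊓ B) + finrank F ↥(A ⊓ C) ≤ finrank F A + finrank F ↥(A ⊓ B ⊓ C) := by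
  have hsup : finrank F ↥(A ⊓ B ⊔ A ⊓ C) ≤ finrank F A :=
    finrank_mono (sup_le inf_le_left inf_le_left)
  have hinf : A ⊓ B ⊓ (A ⊓ C) = A ⊓ B ⊓ C := by
    rw [inf_inf_inf_comm, inf_idem, inf_assoc]
  have := finrank_sup_add_finrank_inf_eq (A ⊓ B) (A ⊓ C)
  rw [hinf] at this
  omega

theorem finrank_sup_add_finrank_sup_le_of_le_inf {A B P R : Submodule F V} (hR : R ≤ A ⊓ P) :
    finrank F ↥(A ⊔ P) + finrank F ↥(B ⊔ R) ≤ finrank F A + finrank F B + finrank F P := by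
  have hAP := finrank_sup_add_finrank_inf_eq A P
  have hBR := finrank_add_le_finrank_add_finrank B R
  have hR := finrank_mono hR
  omega

theorem finrank_sup_sup_add_finrank_pairwise_inf_le (P₀ P₁ P₂ : Submodule F V) :
    finrank F ↥(P₀ ⊔ P₁ ⊔ P₂) + finrank F ↥(P₀ ⊓ P₁ ⊔ P₀ ⊓ P₂ ⊔ P₁ ⊓ P₂) +
        finrank F ↥(P₀ ⊓ P₁ ⊓ P₂) ≤ finrank F P₀ + finrank F P₁ + finrank F P₂ := by
  have h01 := finrank_sup_add_finrank_inf_eq P₀ P₁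
  have h012 := finrank_sup_add_finrank_inf_eq (P₀ ⊔ P₁) P₂
  have hJ := finrank_sup_add_finrank_inf_eq (P₀ ⊓ P₁) (P₀ ⊓ P₂ ⊔ P₁ ⊓ P₂)
  have hJle : finrank F ↥(P₀ ⊓ P₂ ⊔ P₁ ⊓ P₂) ≤ finrank F ↥((P₀ ⊔ P₁) ⊓ P₂) :=
    finrank_mono (sup_le (inf_le_inf_right _ le_sup_left) (inf_le_inf_right _ le_sup_right))
  have hX : finrank F ↥(P₀ ⊓ P₁ ⊓ P₂) ≤ finrank F ↥(P₀ ⊓ P₁ ⊓ (P₀ ⊓ P₂ ⊔ P₁ ⊓ P₂)) :=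
    finrank_mono (le_inf inf_le_left (le_sup_of_le_left (inf_le_inf_right _ inf_le_left)))
  rw [sup_assoc (P₀ ⊓ P₁)]
  omega

theorem finrank_iSup_add_finrank_supPairwiseInf_add_finrank_inf_le_fin_three
    (π : Fin 3 → Submodule F V) :
    finrank F ↥(⨆ i, π i) + finrank F ↥(supPairwiseInf π) + finrank F ↥(π 0 ⊓ π 1 ⊓ π 2) ≤
      ∑ i, finrank F ↥(π i) := by
  rw [iSup_fin_three, supPairwiseInf_fin_three, Fin.sum_univ_three]
  exact finrank_sup_sup_add_finrank_pairwise_inf_le (π 0) (π 1) (π 2)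

theorem finrank_iSup_add_finrank_supPairwiseInf_add_finrank_inf_le {m : ℕ}
    (π : Fin (m + 3) → Submodule F V) :
    finrank F ↥(⨆ i, π i) + finrank F ↥(supPairwiseInf π) + finrank F ↥(π 0 ⊓ π 1 ⊓ π 2) ≤
      ∑ i, finrank F ↥(π i) := by
  induction m with
  | zero => exact finrank_iSup_add_finrank_supPairwiseInf_add_finrank_inf_le_fin_three π
  | succ m ih =>
    have hR : ⨆ i : Fin (m + 3), π i.castSucc ⊓ π (Fin.last _) ≤
        (⨆ i : Fin (m + 3), π i.castSucc) ⊓ π (Fin.last _) :=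
      iSup_le fun i => inf_le_inf_right _ (le_iSup (fun i : Fin (m + 3) => π i.castSucc) i)
    have hstep := finrank_sup_add_finrank_sup_le_of_le_inf
      (B := supPairwiseInf fun i : Fin (m + 3) => π i.castSucc) hR
    have ih' : finrank F ↥(⨆ i : Fin (m + 3), π i.castSucc) +
        finrank F ↥(supPairwiseInf fun i : Fin (m + 3) => π i.castSucc) +
        finrank F ↥(π 0 ⊓ π 1 ⊓ π 2) ≤ ∑ i : Fin (m + 3), finrank F ↥(π i.castSucc) :=
      ih fun i => π i.castSucc  -- `(2 : Fin (m + 3)).castSucc = 2` holds by `rfl`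
    rw [iSup_fin_succ_eq_iSup_castSucc_sup_last, supPairwiseInf_fin_succ, Fin.sum_univ_castSucc]
    omega

end Submodule

theorem scid_bound_n_ge_three_general (F V : Type*) [Field F]
    [AddCommGroup V] [Module F V] [FiniteDimensional F V]
    (n k t : ℕ) (hn : 3 ≤ n)
    (π : Fin n → Submodule F V)
    (hdim : ∀ i, finrank F ↥(π i) = k)
    (hint : ∀ i j, i ≠ j → finrank F ↥(π i ⊓ π j) = k - t) :
    finrank F ↥(⨆ i, π i) +
      finrank F ↥(⨆ i, ⨆ j, ⨆ (_ : i < j), π i ⊓ π j) ≤ (n - 1) * k + 2 * t := by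
  obtain ⟨m, rfl⟩ : ∃ m, n = m + 3 := ⟨n - 3, by omega⟩
  have hbound := Submodule.finrank_iSup_add_finrank_supPairwiseInf_add_finrank_inf_le π
  have htriple := Submodule.finrank_inf_add_finrank_inf_le (π 0) (π 1) (π 2)
  rw [hint 0 1 (by simp), hint 0 2 (by simp [Fin.ext_iff, Nat.mod_eq_of_lt]), hdim] at htriple
  have hsum : ∑ i, finrank F ↥(π i) = (m + 2) * k + k := by
    simp only [hdim, Finset.sum_const, Finset.card_univ, Fintype.card_fin, smul_eq_mul]
    ring
  rw [hsum] at hbound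
  rw [show m + 3 - 1 = m + 2 by omega]
  unfold supPairwiseInf at hbound
  omega

theorem scid_bound_n_ge_three (F V : Type*) [Field F] [Fintype F]
    [AddCommGroup V] [Module F V] [FiniteDimensional F V]
    (n k t : ℕ) (hn : 3 ≤ n) (ht : t ≤ k)
    (π : Fin n → Submodule F V) (hinj : Function.Injective π)
    (hdim : ∀ i, finrank F ↥(π i) = k)
    (hint : ∀ i j, i ≠ j → finrank F ↥(π i ⊓ π j) = k - t) :
    finrank F ↥(⨆ i, π i) +
      finrank F ↥(⨆ i, ⨆ j, ⨆ (_ : i < j), π i ⊓ π j) ≤ (n - 1) * k + 2 * t :=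
  scid_bound_n_ge_three_general F V n k t hn π hdim hint
end

section
/- Suppose (n-1)(k-t) ≤ k and there exist subspaces V_{ij} (1≤i<j≤n) of dimension k-t and U_i (1≤i≤n) of dimension k-(n-1)(k-t) such that the sum of all these subspaces is direct (its dimension equals n(k-(n-1)(k-t)) + n(n-1)(k-t)/2). Define πᵢ := ⟨Uᵢ, V_{ij} for j ≠ i⟩ (where V_{ji} := V_{ij} for j < i). Then {π₁,...,πₙ} is a (k,k-t)-SCID with πᵢ ∩ πⱼ = V_{ij}, and dim S + dim I = nk, where S is the span of all πᵢ and I the span of all pairwise intersections. -/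
/-!
Index the blocks `U i` and `V i j` by unordered pairs: `s(i, i)` carries `U i` and `s(i, j)`,
`i ≠ j`, carries `V i j`. Then `π i` is the sum of the blocks whose index contains `i`, and the
dimension hypothesis says exactly that the blocks are independent. For an independent family in a
modular lattice, sums over two index sets meet in the sum over their intersection, and the only
pair containing both `i` and `j` is `s(i, j)`; so `π i ⊓ π j = V i j`. Every remaining claim is a
count of blocks.
-/

open Module Finset

theorem iSupIndep.biSup_inf_biSup {α ι : Type*} [CompleteLattice α] [IsModularLattice α]
    [IsCompactlyGenerated α] {f : ι → α} (hf : iSupIndep f) (s t : Set ι) :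
    (⨆ i ∈ s, f i) ⊓ (⨆ i ∈ t, f i) = ⨆ i ∈ s ∩ t, f i := by
  have hle : (⨆ i ∈ s ∩ t, f i) ≤ ⨆ i ∈ t, f i := biSup_mono fun _ => And.right
  calc (⨆ i ∈ s, f i) ⊓ (⨆ i ∈ t, f i)
      = ((⨆ i ∈ s ∩ t, f i) ⊔ ⨆ i ∈ s \ t, f i) ⊓ ⨆ i ∈ t, f i := by
        rw [← _root_.iSup_union, Set.inter_union_sdiff]
    _ = (⨆ i ∈ s ∩ t, f i) ⊔ ((⨆ i ∈ s \ t, f i) ⊓ ⨆ i ∈ t, f i) :=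
        sup_inf_assoc_of_le _ hle
    _ = ⨆ i ∈ s ∩ t, f i := by
        rw [(hf.disjoint_biSup_biSup Set.disjoint_sdiff_left).eq_bot, sup_bot_eq]

namespace Submodule

variable {K V ι : Type*} [DivisionRing K] [AddCommGroup V] [Module K V] [FiniteDimensional K V]
  {W : ι → Submodule K V}

theorem finrank_biSup_le_sum [DecidableEq ι] (W : ι → Submodule K V) (s : Finset ι) :
    finrank K ↥(⨆ i ∈ s, W i) ≤ ∑ i ∈ s, finrank K ↥(W i) := by
  induction s using Finset.induction with
  | empty => simp
  | insert a s _ ih =>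
    rw [Finset.iSup_insert, Finset.sum_insert ‹_›]
    exact (finrank_add_le_finrank_add_finrank _ _).trans (Nat.add_le_add_left ih _)

theorem _root_.iSupIndep.finrank_biSup [DecidableEq ι] (hW : iSupIndep W) (s : Finset ι) :
    finrank K ↥(⨆ i ∈ s, W i) = ∑ i ∈ s, finrank K ↥(W i) := by
  induction s using Finset.induction with
  | empty => simp
  | insert a s ha ih =>
    have hdisj : Disjoint (W a) (⨆ i ∈ s, W i) := hW.disjoint_biSup (by exact_mod_cast ha)
    rw [Finset.iSup_insert, Finset.sum_insert ha, ← ih, ← finrank_sup_add_finrank_inf_eq,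
      hdisj.eq_bot, finrank_bot, add_zero]

theorem _root_.iSupIndep.finrank_iSup [Fintype ι] (hW : iSupIndep W) :
    finrank K ↥(⨆ i, W i) = ∑ i, finrank K ↥(W i) := by
  classical
  rw [← hW.finrank_biSup univ, show (⨆ i ∈ univ, W i) = ⨆ i, W i by simp]

theorem iSupIndep_of_finrank_iSup_eq_sum [Fintype ι]
    (h : finrank K ↥(⨆ i, W i) = ∑ i, finrank K ↥(W i)) : iSupIndep W := by
  classical
  refine iSupIndep_def.2 fun i => disjoint_iff.2 (finrank_eq_zero.1 ?_)
  have hrest : (⨆ (j) (_ : j ≠ i), W j) = ⨆ j ∈ univ.erase i, W j := by simp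
  have hle := finrank_biSup_le_sum W (univ.erase i)
  have hsum := add_sum_erase univ (fun j => finrank K ↥(W j)) (mem_univ i)
  have hsplit := finrank_sup_add_finrank_inf_eq (W i) (⨆ (j) (_ : j ≠ i), W j)
  rw [← iSup_split_single, hrest] at hsplit
  rw [hrest]
  omega

end Submodule

theorem Sym2.iSup_mk_eq_biSup_mem {α ι : Type*} [CompleteLattice α] (f : Sym2 ι → α) (i : ι) :
    ⨆ j, f s(i, j) = ⨆ z ∈ {z : Sym2 ι | i ∈ z}, f z := by
  have hrange : {z : Sym2 ι | i ∈ z} = Set.range fun j => s(i, j) := by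
    ext z; simp [Sym2.mem_iff_exists, eq_comm]
  rw [hrange, iSup_range]

theorem Sym2.iSup_iSup_mk {α ι : Type*} [CompleteLattice α] (f : Sym2 ι → α) :
    ⨆ (i) (j), f s(i, j) = ⨆ z, f z := by
  rw [← Sym2.mk_surjective.iSup_comp, iSup_prod]
  rfl

section BlockFamily

variable {K V ι : Type*} [DivisionRing K] [AddCommGroup V] [Module K V] [DecidableEq ι]

def blockFamily (U : ι → Submodule K V) (Vij : ι → ι → Submodule K V)
    (hsymm : ∀ i j, Vij i j = Vij j i) : Sym2 ι → Submodule K V :=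
  Sym2.lift ⟨fun i j => if i = j then U i else Vij i j, fun i j => by
    by_cases h : i = j
    · subst h; rfl
    · simp only [if_neg h, if_neg (Ne.symm h), hsymm]⟩

variable (U : ι → Submodule K V) (Vij : ι → ι → Submodule K V)
  (hsymm : ∀ i j, Vij i j = Vij j i)

@[simp]
theorem blockFamily_diag (i : ι) : blockFamily U Vij hsymm s(i, i) = U i := by
  simp [blockFamily]

theorem blockFamily_of_ne {i j : ι} (hij : i ≠ j) :
    blockFamily U Vij hsymm s(i, j) = Vij i j := by
  simp [blockFamily, hij]

theorem iSup_blockFamily_mk (i : ι) :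
    ⨆ j, blockFamily U Vij hsymm s(i, j) = U i ⊔ ⨆ (j) (_ : j ≠ i), Vij i j := by
  rw [iSup_split_single _ i, blockFamily_diag]
  congr 1
  exact iSup_congr fun j => iSup_congr fun hj => blockFamily_of_ne U Vij hsymm hj.symm

theorem iSup_blockFamily_not_isDiag [LinearOrder ι] :
    ⨆ z : {z : Sym2 ι // ¬z.IsDiag}, blockFamily U Vij hsymm z =
      ⨆ (i) (j) (_ : i < j), Vij i j := by
  apply le_antisymm
  · refine iSup_le fun ⟨z, hz⟩ => ?_
    induction z using Sym2.ind with | h i j => ?_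
    have hij : i ≠ j := by simpa using hz
    rw [blockFamily_of_ne U Vij hsymm hij]
    rcases hij.lt_or_gt with h | h
    · exact le_iSup₂_of_le i j (le_iSup_of_le h le_rfl)
    · rw [hsymm]; exact le_iSup₂_of_le j i (le_iSup_of_le h le_rfl)
  · refine iSup₂_le fun i j => iSup_le fun h => ?_
    have hz : ¬(s(i, j)).IsDiag := by simpa using h.ne
    exact le_iSup_of_le ⟨s(i, j), hz⟩ (blockFamily_of_ne U Vij hsymm h.ne).ge

theorem iSup_blockFamily [LinearOrder ι] :
    ⨆ z, blockFamily U Vij hsymm z = (⨆ i, U i) ⊔ ⨆ (i) (j) (_ : i < j), Vij i j := by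
  rw [← iSup_blockFamily_not_isDiag U Vij hsymm]
  apply le_antisymm
  · refine iSup_le fun z => ?_
    by_cases hz : z.IsDiag
    · induction z using Sym2.ind with | h i j => ?_
      obtain rfl : i = j := Sym2.mk_isDiag_iff.1 hz
      exact le_sup_of_le_left (le_iSup_of_le i (blockFamily_diag U Vij hsymm i).le)
    · exact le_sup_of_le_right (le_iSup_of_le ⟨z, hz⟩ le_rfl)
  · exact sup_le (iSup_le fun i => le_iSup_of_le s(i, i) (blockFamily_diag U Vij hsymm i).ge)
      (iSup_le fun z => le_iSup _ _)

theorem iSupIndep.iSup_blockFamily_mk_inf (hW : iSupIndep (blockFamily U Vij hsymm)) {i j : ι}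
    (hij : i ≠ j) :
    (⨆ l, blockFamily U Vij hsymm s(i, l)) ⊓ ⨆ l, blockFamily U Vij hsymm s(j, l) =
      Vij i j := by
  have hpair : {z : Sym2 ι | i ∈ z} ∩ {z | j ∈ z} = {s(i, j)} := by
    ext z; simp [Sym2.mem_and_mem_iff hij]
  rw [Sym2.iSup_mk_eq_biSup_mem, Sym2.iSup_mk_eq_biSup_mem, hW.biSup_inf_biSup, hpair,
    _root_.iSup_singleton, blockFamily_of_ne U Vij hsymm hij]

variable {a b : ℕ}

theorem finrank_blockFamily_of_isDiag (hU : ∀ i, finrank K ↥(U i) = a) {z : Sym2 ι}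
    (hz : z.IsDiag) : finrank K ↥(blockFamily U Vij hsymm z) = a := by
  induction z using Sym2.ind with | h i j => ?_
  obtain rfl : i = j := Sym2.mk_isDiag_iff.1 hz
  rw [blockFamily_diag, hU]

theorem finrank_blockFamily_of_not_isDiag (hV : ∀ i j, i ≠ j → finrank K ↥(Vij i j) = b)
    {z : Sym2 ι} (hz : ¬z.IsDiag) : finrank K ↥(blockFamily U Vij hsymm z) = b := by
  induction z using Sym2.ind with | h i j => ?_
  have hij : i ≠ j := mt Sym2.mk_isDiag_iff.2 hz
  rw [blockFamily_of_ne U Vij hsymm hij, hV i j hij]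

variable [Fintype ι]

theorem sum_finrank_blockFamily_not_isDiag (hV : ∀ i j, i ≠ j → finrank K ↥(Vij i j) = b) :
    ∑ z : {z : Sym2 ι // ¬z.IsDiag}, finrank K ↥(blockFamily U Vij hsymm z) =
      (Fintype.card ι).choose 2 * b := by
  rw [Fintype.sum_congr _ (fun _ => b) fun z =>
      finrank_blockFamily_of_not_isDiag U Vij hsymm hV z.2,
    sum_const, card_univ, Sym2.card_subtype_not_diag, smul_eq_mul]

theorem sum_finrank_blockFamily (hU : ∀ i, finrank K ↥(U i) = a)
    (hV : ∀ i j, i ≠ j → finrank K ↥(Vij i j) = b) :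
    ∑ z, finrank K ↥(blockFamily U Vij hsymm z) =
      Fintype.card ι * a + (Fintype.card ι).choose 2 * b := by
  rw [← Fintype.sum_subtype_add_sum_subtype Sym2.IsDiag,
    sum_finrank_blockFamily_not_isDiag U Vij hsymm hV,
    Fintype.sum_congr _ (fun _ => a) fun z => finrank_blockFamily_of_isDiag U Vij hsymm hU z.2,
    sum_const, card_univ, Sym2.card_subtype_diag, smul_eq_mul]

variable [FiniteDimensional K V]

theorem iSupIndep.finrank_iSup_blockFamily_mk (hU : ∀ i, finrank K ↥(U i) = a)
    (hV : ∀ i j, i ≠ j → finrank K ↥(Vij i j) = b) (hW : iSupIndep (blockFamily U Vij hsymm))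
    (i : ι) :
    finrank K ↥(⨆ j, blockFamily U Vij hsymm s(i, j)) = a + (Fintype.card ι - 1) * b := by
  have hinj : Function.Injective fun j => s(i, j) := fun _ _ => Sym2.congr_right.1
  have hrest : ∀ j ∈ univ.erase i, finrank K ↥(blockFamily U Vij hsymm s(i, j)) = b :=
    fun j hj => by
      have hij := (ne_of_mem_erase hj).symm
      rw [blockFamily_of_ne U Vij hsymm hij, hV i j hij]
  calc finrank K ↥(⨆ j, blockFamily U Vij hsymm s(i, j))
      = ∑ j, finrank K ↥(blockFamily U Vij hsymm s(i, j)) := (hW.comp hinj).finrank_iSup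
    _ = a + (Fintype.card ι - 1) * b := by
      rw [← add_sum_erase _ _ (mem_univ i), sum_congr rfl hrest, sum_const,
        card_erase_of_mem (mem_univ i), card_univ, blockFamily_diag, hU, smul_eq_mul]

theorem iSupIndep.finrank_iSup_blockFamily_not_isDiag
    (hV : ∀ i j, i ≠ j → finrank K ↥(Vij i j) = b) (hW : iSupIndep (blockFamily U Vij hsymm)) :
    finrank K ↥(⨆ z : {z : Sym2 ι // ¬z.IsDiag}, blockFamily U Vij hsymm z) =
      (Fintype.card ι).choose 2 * b :=
  (hW.comp Subtype.val_injective).finrank_iSup.trans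
    (sum_finrank_blockFamily_not_isDiag U Vij hsymm hV)

end BlockFamily

theorem scid_construction_general (F V : Type*) [Field F]
    [AddCommGroup V] [Module F V] [FiniteDimensional F V]
    (n k t : ℕ) (hcond : (n - 1) * (k - t) ≤ k)
    (Vij : Fin n → Fin n → Submodule F V)
    (hsymm : ∀ i j, Vij i j = Vij j i)
    (hVdim : ∀ i j, i ≠ j → finrank F ↥(Vij i j) = k - t)
    (U : Fin n → Submodule F V)
    (hUdim : ∀ i, finrank F ↥(U i) = k - (n - 1) * (k - t))
    (hdirect :
      finrank F ↥((⨆ i, U i) ⊔ ⨆ i, ⨆ j, ⨆ (_ : i < j), Vij i j) =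
        n * (k - (n - 1) * (k - t)) + n * (n - 1) * (k - t) / 2)
    (π : Fin n → Submodule F V)
    (hπ : ∀ i, π i = U i ⊔ ⨆ j, ⨆ (_ : j ≠ i), Vij i j) :
    (∀ i, finrank F ↥(π i) = k) ∧
      (∀ i j, i ≠ j → π i ⊓ π j = Vij i j) ∧
      (∀ i j, i ≠ j → finrank F ↥(π i ⊓ π j) = k - t) ∧
      finrank F ↥(⨆ i, π i) +
        finrank F ↥(⨆ i, ⨆ j, ⨆ (_ : i < j), π i ⊓ π j) = n * k := by
  set W := blockFamily U Vij hsymm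
  have hπW : ∀ i, π i = ⨆ j, W s(i, j) := fun i => by rw [hπ, iSup_blockFamily_mk]
  have hpairs : 2 * (n.choose 2 * (k - t)) = n * ((n - 1) * (k - t)) := by
    rw [← mul_assoc, Nat.choose_two_right, Nat.mul_div_cancel' (Nat.even_mul_pred_self n).two_dvd,
      mul_assoc]
  have hhalf : n * (n - 1) * (k - t) / 2 = n.choose 2 * (k - t) := by
    rw [mul_assoc, ← hpairs, Nat.mul_div_cancel_left _ two_pos]
  have hindep : iSupIndep W := by
    refine Submodule.iSupIndep_of_finrank_iSup_eq_sum ?_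
    rw [iSup_blockFamily, hdirect, sum_finrank_blockFamily U Vij hsymm hUdim hVdim,
      Fintype.card_fin, hhalf]
  have hinf : ∀ i j, i ≠ j → π i ⊓ π j = Vij i j := fun i j hij => by
    rw [hπW, hπW, hindep.iSup_blockFamily_mk_inf U Vij hsymm hij]
  have hS : ⨆ i, π i = ⨆ z, W z := by simp_rw [hπW, Sym2.iSup_iSup_mk]
  have hI : ⨆ (i) (j) (_ : i < j), π i ⊓ π j = ⨆ z : {z : Sym2 (Fin n) // ¬z.IsDiag}, W z := by
    rw [iSup_blockFamily_not_isDiag]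
    exact iSup_congr fun i => iSup_congr fun j => iSup_congr fun h => hinf i j h.ne
  refine ⟨fun i => ?_, hinf, fun i j hij => by rw [hinf i j hij, hVdim i j hij], ?_⟩
  · rw [hπW, hindep.finrank_iSup_blockFamily_mk U Vij hsymm hUdim hVdim, Fintype.card_fin]
    exact Nat.sub_add_cancel hcond
  · rw [hS, hI, hindep.finrank_iSup_blockFamily_not_isDiag U Vij hsymm hVdim, Fintype.card_fin,
      iSup_blockFamily, hdirect, hhalf, add_assoc, ← two_mul, hpairs, ← mul_add,
      Nat.sub_add_cancel hcond]

theorem scid_construction (F V : Type*) [Field F] [Fintype F]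
    [AddCommGroup V] [Module F V] [FiniteDimensional F V]
    (n k t : ℕ) (hn : 2 ≤ n) (ht : t ≤ k) (hcond : (n - 1) * (k - t) ≤ k)
    (Vij : Fin n → Fin n → Submodule F V)
    (hsymm : ∀ i j, Vij i j = Vij j i)
    (hVdim : ∀ i j, i ≠ j → finrank F ↥(Vij i j) = k - t)
    (U : Fin n → Submodule F V)
    (hUdim : ∀ i, finrank F ↥(U i) = k - (n - 1) * (k - t))
    (hdirect :
      finrank F ↥((⨆ i, U i) ⊔ ⨆ i, ⨆ j, ⨆ (_ : i < j), Vij i j) =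
        n * (k - (n - 1) * (k - t)) + n * (n - 1) * (k - t) / 2)
    (π : Fin n → Submodule F V)
    (hπ : ∀ i, π i = U i ⊔ ⨆ j, ⨆ (_ : j ≠ i), Vij i j) :
    (∀ i, finrank F ↥(π i) = k) ∧
      (∀ i j, i ≠ j → π i ⊓ π j = Vij i j) ∧
      (∀ i j, i ≠ j → finrank F ↥(π i ⊓ π j) = k - t) ∧
      finrank F ↥(⨆ i, π i) +
        finrank F ↥(⨆ i, ⨆ j, ⨆ (_ : i < j), π i ⊓ π j) = n * k :=
  scid_construction_general F V n k t hcond Vij hsymm hVdim U hUdim hdirect π hπ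
end

section
/- Let {π₁,...,πₙ} be a (k,k-t)-SCID with (n-1)(k-t) ≤ k, S its span, and I the span of all pairwise intersections. If dim S + dim I = nk, then dim I = n(n-1)(k-t)/2, i.e., the pairwise intersections πᵢ∩πⱼ span a space of maximal possible dimension. -/
/-!
Adding subspaces `W_i` to a subspace `X` one at a time, the dimension of `X + Σ W_i` grows by
`dim W_i - dim (W_i ∩ U)`, with `U` the sum so far, while the span of all intersections
`W_i ∩ X` and `W_i ∩ W_j` grows by at most `dim (W_i ∩ U)`. Taking `X = π_a + π_b` and the
remaining `π_i` gives `dim S + dim (π_a ∩ π_b) + dim R ≤ nk`, where `R` spans the other pairwise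
intersections. As `I = (π_a ∩ π_b) + R`, the hypothesis `dim S + dim I = nk` forces
`(π_a ∩ π_b) ∩ R = 0`: the pairwise intersections are independent, so `dim I` is the sum of their
dimensions, `(n choose 2)(k - t)`.
-/

open Module

theorem iSup_iSup_lt_eq_finset_sup {α ι : Type*} [CompleteLattice α] [Fintype ι] [LinearOrder ι]
    (f : ι → ι → α) :
    ⨆ i, ⨆ j, ⨆ (_ : i < j), f i j =
      ({x : ι × ι | x.1 < x.2} : Finset _).sup fun x => f x.1 x.2 := by
  simp [Finset.sup_eq_iSup, iSup_prod]

namespace Submodule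

variable {K V ι : Type*} [DivisionRing K] [AddCommGroup V] [Module K V] [FiniteDimensional K V]

theorem disjoint_of_finrank_add_le_finrank_sup {A B : Submodule K V}
    (h : finrank K A + finrank K B ≤ finrank K ↥(A ⊔ B)) : Disjoint A B := by
  have := finrank_sup_add_finrank_inf_eq A B
  rw [disjoint_iff, ← finrank_eq_zero]
  omega

theorem finrank_finset_sup_of_supIndep [DecidableEq ι] {s : Finset ι} {W : ι → Submodule K V}
    (h : s.SupIndep W) : finrank K ↥(s.sup W) = ∑ i ∈ s, finrank K (W i) := by
  induction s using Finset.induction_on with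
  | empty => simp
  | insert a s ha ih =>
    have hdisj : Disjoint (W a) (s.sup W) :=
      h (Finset.subset_insert a s) (Finset.mem_insert_self a s) ha
    have := finrank_sup_add_finrank_inf_eq (W a) (s.sup W)
    rw [Finset.sup_insert, Finset.sum_insert ha, ← ih (h.subset (Finset.subset_insert a s))]
    rwa [hdisj.eq_bot, finrank_bot, add_zero] at this

theorem finrank_sup_finset_sup_add_finrank_le [DecidableEq ι] (X : Submodule K V) (s : Finset ι)
    (W : ι → Submodule K V) :
    finrank K ↥(X ⊔ s.sup W) +
        finrank K ↥((s.sup fun i => W i ⊓ X) ⊔ s.offDiag.sup fun p => W p.1 ⊓ W p.2) ≤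
      finrank K X + ∑ i ∈ s, finrank K (W i) := by
  induction s using Finset.induction_on with
  | empty =>
    rw [Finset.offDiag_empty, Finset.sup_empty, Finset.sup_empty, Finset.sup_empty, sup_bot_eq,
      sup_bot_eq, finrank_bot]
    simp
  | insert a s ha ih =>
    set S := X ⊔ s.sup W
    set T := (s.sup fun i => W i ⊓ X) ⊔ s.offDiag.sup fun p => W p.1 ⊓ W p.2
    have hS : X ⊔ (insert a s).sup W = W a ⊔ S := by
      rw [Finset.sup_insert, sup_left_comm]
    have hT : ((insert a s).sup fun i => W i ⊓ X) ⊔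
        (insert a s).offDiag.sup (fun p => W p.1 ⊓ W p.2) ≤ T ⊔ (W a ⊓ S) := by
      have hWS : ∀ i ∈ s, W i ≤ S := fun i hi => (Finset.le_sup hi).trans le_sup_right
      refine sup_le ?_ (Finset.sup_le fun p hp => ?_)
      · rw [Finset.sup_insert]
        exact sup_le (le_sup_of_le_right (inf_le_inf_left _ le_sup_left))
          (le_sup_of_le_left le_sup_left)
      · obtain ⟨hp1, hp2, hne⟩ := Finset.mem_offDiag.1 hp
        rcases Finset.mem_insert.1 hp1 with h1 | h1 <;> rcases Finset.mem_insert.1 hp2 with h2 | h2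
        · exact absurd (h1.trans h2.symm) hne
        · rw [h1]
          exact le_sup_of_le_right (inf_le_inf_left _ (hWS _ h2))
        · rw [h2, inf_comm]
          exact le_sup_of_le_right (inf_le_inf_left _ (hWS _ h1))
        · exact le_sup_of_le_left (le_sup_of_le_right
            (Finset.le_sup (f := fun p => W p.1 ⊓ W p.2) (Finset.mem_offDiag.2 ⟨h1, h2, hne⟩)))
    have h1 := finrank_sup_add_finrank_inf_eq (W a) S
    have h2 := finrank_add_le_finrank_add_finrank T (W a ⊓ S)
    have h3 := finrank_mono hT
    rw [hS, Finset.sum_insert ha]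
    omega

theorem finrank_finset_sup_add_finrank_inf_add_le [DecidableEq ι] {s : Finset ι}
    (W : ι → Submodule K V) {a b : ι} (ha : a ∈ s) (hb : b ∈ s) (hab : a ≠ b) :
    finrank K ↥(s.sup W) + finrank K ↥(W a ⊓ W b) +
        finrank K ↥((s.offDiag \ {(a, b), (b, a)}).sup fun p => W p.1 ⊓ W p.2) ≤
      ∑ i ∈ s, finrank K (W i) := by
  set s' := (s.erase a).erase b
  set X := W a ⊔ W b
  have hb' : b ∈ s.erase a := Finset.mem_erase.2 ⟨hab.symm, hb⟩
  have hs : s = insert a (insert b s') := by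
    rw [Finset.insert_erase hb', Finset.insert_erase ha]
  have hsup : s.sup W = X ⊔ s'.sup W := by
    rw [hs, Finset.sup_insert, Finset.sup_insert, sup_assoc]
  have hsum : ∑ i ∈ s, finrank K (W i) =
      finrank K (W a) + (finrank K (W b) + ∑ i ∈ s', finrank K (W i)) := by
    rw [← Finset.add_sum_erase _ _ ha, ← Finset.add_sum_erase _ _ hb']
  have hX_of : ∀ i ∈ s, i ∉ s' → W i ≤ X := by
    intro i hi hi'
    obtain rfl | rfl : i = a ∨ i = b := by grind
    exacts [le_sup_left, le_sup_right]
  have hR : ((s.offDiag \ {(a, b), (b, a)}).sup fun p => W p.1 ⊓ W p.2) ≤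
      (s'.sup fun i => W i ⊓ X) ⊔ s'.offDiag.sup fun p => W p.1 ⊓ W p.2 := by
    refine Finset.sup_le fun p hp => ?_
    obtain ⟨hp, hpab⟩ := Finset.mem_sdiff.1 hp
    obtain ⟨h1, h2, hne⟩ := Finset.mem_offDiag.1 hp
    by_cases h1' : p.1 ∈ s'
    · by_cases h2' : p.2 ∈ s'
      · exact le_sup_of_le_right (Finset.le_sup (f := fun p => W p.1 ⊓ W p.2)
          (Finset.mem_offDiag.2 ⟨h1', h2', hne⟩))
      · exact le_sup_of_le_left ((inf_le_inf_left _ (hX_of _ h2 h2')).trans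
          (Finset.le_sup (f := fun i => W i ⊓ X) h1'))
    · have h2' : p.2 ∈ s' := by
        simp only [Finset.mem_insert, Finset.mem_singleton, Prod.ext_iff] at hpab
        grind
      rw [inf_comm]
      exact le_sup_of_le_left ((inf_le_inf_left _ (hX_of _ h1 h1')).trans
          (Finset.le_sup (f := fun i => W i ⊓ X) h2'))
  have h1 := finrank_sup_finset_sup_add_finrank_le X s' W
  have h2 : finrank K X + _ = _ := finrank_sup_add_finrank_inf_eq (W a) (W b)
  have h3 := finrank_mono hR
  rw [hsup]
  omega

theorem supIndep_inf_of_finrank_sup_add_finrank_sup_eq [Fintype ι] [LinearOrder ι]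
    (W : ι → Submodule K V)
    (h : finrank K ↥(Finset.univ.sup W) +
        finrank K ↥(({x : ι × ι | x.1 < x.2} : Finset _).sup fun x => W x.1 ⊓ W x.2) =
      ∑ i, finrank K (W i)) :
    ({x : ι × ι | x.1 < x.2} : Finset _).SupIndep fun x => W x.1 ⊓ W x.2 := by
  set Q : Finset (ι × ι) := {x | x.1 < x.2}
  rw [Finset.supIndep_iff_disjoint_erase]
  intro x hx
  have hlt : x.1 < x.2 := (Finset.mem_filter.1 hx).2
  have hQ : (Q.sup fun x => W x.1 ⊓ W x.2) =
      W x.1 ⊓ W x.2 ⊔ (Q.erase x).sup fun x => W x.1 ⊓ W x.2 := by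
    rw [← Finset.sup_insert (f := fun x : ι × ι => W x.1 ⊓ W x.2), Finset.insert_erase hx]
  have hsub : Q.erase x ⊆ Finset.univ.offDiag \ {(x.1, x.2), (x.2, x.1)} := by
    intro p hp
    simp only [Q, Finset.mem_erase, Finset.mem_filter, Finset.mem_sdiff, Finset.mem_offDiag,
      Finset.mem_insert, Finset.mem_singleton, Finset.mem_univ, true_and] at hp ⊢
    grind
  have h1 := finrank_finset_sup_add_finrank_inf_add_le W (Finset.mem_univ x.1)
    (Finset.mem_univ x.2) hlt.ne
  have h2 := finrank_mono (Finset.sup_mono (f := fun x : ι × ι => W x.1 ⊓ W x.2) hsub)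
  apply disjoint_of_finrank_add_le_finrank_sup
  rw [← hQ]
  omega

end Submodule

theorem scid_max_implies_I_max_general (F V : Type*) [Field F]
    [AddCommGroup V] [Module F V] [FiniteDimensional F V]
    (n k t : ℕ)
    (π : Fin n → Submodule F V)
    (hdim : ∀ i, finrank F ↥(π i) = k)
    (hint : ∀ i j, i ≠ j → finrank F ↥(π i ⊓ π j) = k - t)
    (hmax : finrank F ↥(⨆ i, π i) +
        finrank F ↥(⨆ i, ⨆ j, ⨆ (_ : i < j), π i ⊓ π j) = n * k) :
    finrank F ↥(⨆ i, ⨆ j, ⨆ (_ : i < j), π i ⊓ π j) =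
      n * (n - 1) * (k - t) / 2 := by
  rw [iSup_iSup_lt_eq_finset_sup] at hmax ⊢
  rw [← Finset.sup_univ_eq_iSup] at hmax
  have hindep :=
    Submodule.supIndep_inf_of_finrank_sup_add_finrank_sup_eq π (by simp [hmax, hdim])
  have hcard : ({x : Fin n × Fin n | x.1 < x.2} : Finset _).card = n.choose 2 := by
    simpa [Finset.univ_product_univ] using
      Finset.card_product_filter_lt (s := (Finset.univ : Finset (Fin n)))
  rw [Submodule.finrank_finset_sup_of_supIndep hindep,
    Finset.sum_congr rfl fun x hx => hint x.1 x.2 (Finset.mem_filter.1 hx).2.ne, Finset.sum_const,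
    hcard, smul_eq_mul, Nat.choose_two_right,
    Nat.div_mul_right_comm (Nat.even_mul_pred_self n).two_dvd]

theorem scid_max_implies_I_max (F V : Type*) [Field F] [Fintype F]
    [AddCommGroup V] [Module F V] [FiniteDimensional F V]
    (n k t : ℕ) (hn : 2 ≤ n) (ht : t ≤ k) (hcond : (n - 1) * (k - t) ≤ k)
    (π : Fin n → Submodule F V) (hinj : Function.Injective π)
    (hdim : ∀ i, finrank F ↥(π i) = k)
    (hint : ∀ i j, i ≠ j → finrank F ↥(π i ⊓ π j) = k - t)
    (hmax : finrank F ↥(⨆ i, π i) +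
        finrank F ↥(⨆ i, ⨆ j, ⨆ (_ : i < j), π i ⊓ π j) = n * k) :
    finrank F ↥(⨆ i, ⨆ j, ⨆ (_ : i < j), π i ⊓ π j) =
      n * (n - 1) * (k - t) / 2 :=
  scid_max_implies_I_max_general F V n k t π hdim hint hmax
end

section
/- A (k,k-t)-sunflower with n elements spanning a space of dimension d exists if and only if there exists a partial t-spread of size n in a (d-k+t)-dimensional vector space over F_q spanning that whole space. -/
/-!
Since there are at least two petals, the center `C` lies in every petal, so modulo `C` the petals
become `t`-dimensional subspaces meeting pairwise trivially and spanning a space of dimension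
`d - (k - t)`. Conversely, adding a fixed `(k - t)`-dimensional direct summand `W` to every member
of a spanning partial `t`-spread of `V` gives a sunflower with center `W` spanning `V × W`.
-/

open Module

section

open Submodule

variable {F V W ι : Type*} [Field F] [AddCommGroup V] [Module F V] [AddCommGroup W] [Module F W]

def IsPartialSpread (σ : ι → Submodule F V) (t : ℕ) : Prop :=
  Function.Injective σ ∧ (∀ i, finrank F (σ i) = t) ∧ ∀ i j, i ≠ j → σ i ⊓ σ j = ⊥

def IsSunflower (π : ι → Submodule F V) (C : Submodule F V) (k : ℕ) : Prop :=
  Function.Injective π ∧ (∀ i, finrank F (π i) = k) ∧ ∀ i j, i ≠ j → π i ⊓ π j = C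

namespace Submodule

theorem finrank_map_of_injective {f : V →ₗ[F] W} (hf : Function.Injective f)
    (p : Submodule F V) : finrank F (p.map f) = finrank F p :=
  (equivMapOfInjective f hf p).finrank_eq.symm

theorem finrank_prod [FiniteDimensional F V] [FiniteDimensional F W]
    (p : Submodule F V) (q : Submodule F W) :
    finrank F (p.prod q) = finrank F p + finrank F q := by
  have hinj : Function.Injective (p.subtype.prodMap q.subtype) :=
    Prod.map_injective.mpr ⟨p.injective_subtype, q.injective_subtype⟩
  rw [← Module.finrank_prod, ← LinearMap.finrank_range_of_inj hinj, LinearMap.range_prodMap,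
    range_subtype, range_subtype]

theorem finrank_map_mkQ_add_finrank [FiniteDimensional F V] {C p : Submodule F V} (h : C ≤ p) :
    finrank F (p.map C.mkQ) + finrank F C = finrank F p := by
  have hrange : p.map C.mkQ = LinearMap.range (C.mkQ ∘ₗ p.subtype) := by
    rw [LinearMap.range_comp, range_subtype]
  have hker : LinearMap.ker (C.mkQ ∘ₗ p.subtype) = C.comap p.subtype := by
    rw [LinearMap.ker_comp, ker_mkQ]
  rw [hrange, ← (comapSubtypeEquivOfLe h).finrank_eq, ← hker,
    LinearMap.finrank_range_add_finrank_ker]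

theorem map_mkQ_inf_map_mkQ {C p q : Submodule F V} (hp : C ≤ p) (hq : C ≤ q) :
    p.map C.mkQ ⊓ q.map C.mkQ = (p ⊓ q).map C.mkQ := by
  apply comap_injective_of_surjective C.mkQ_surjective
  rw [comap_inf, comap_map_mkQ, comap_map_mkQ, comap_map_mkQ, sup_eq_right.mpr hp,
    sup_eq_right.mpr hq, sup_eq_right.mpr (le_inf hp hq)]

theorem iSup_comap_eq_top {f : V →ₗ[F] W} (hf : Function.Injective f) {p : ι → Submodule F W}
    (h : ⨆ i, p i = LinearMap.range f) : ⨆ i, (p i).comap f = ⊤ := by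
  have hle : ∀ i, p i ≤ LinearMap.range f := fun i => h ▸ le_iSup p i
  apply map_injective_of_injective hf
  simp only [map_iSup, map_comap_eq_of_le (hle _), map_top, h]

theorem iSup_prod_top [Nonempty ι] (p : ι → Submodule F V) :
    ⨆ i, (p i).prod (⊤ : Submodule F W) = (⨆ i, p i).prod ⊤ := by
  simp only [LinearMap.prod_eq_sup_map]
  rw [iSup_sup_eq, ← map_iSup, iSup_const]

end Submodule

variable {σ π : ι → Submodule F V} {C : Submodule F V} {t k : ℕ}

theorem IsPartialSpread.comap (h : IsPartialSpread σ t) {f : W →ₗ[F] V}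
    (hf : Function.Injective f) (hle : ∀ i, σ i ≤ LinearMap.range f) :
    IsPartialSpread (fun i => (σ i).comap f) t := by
  obtain ⟨hinj, hdim, hdisj⟩ := h
  have hmap : ∀ i, ((σ i).comap f).map f = σ i := fun i => map_comap_eq_of_le (hle i)
  refine ⟨fun i j hij => hinj ?_, fun i => ?_, fun i j hij => ?_⟩
  · rw [← hmap i, ← hmap j]
    exact congrArg (map f) hij
  · rw [← hdim i, ← finrank_map_of_injective hf, hmap]
  · rw [← comap_inf, hdisj i j hij, comap_bot, LinearMap.ker_eq_bot.mpr hf]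

theorem IsPartialSpread.exists_fin_iSup_eq_top [FiniteDimensional F V] {r : ℕ}
    (h : IsPartialSpread σ t) (hr : finrank F ↥(⨆ i, σ i) = r) :
    ∃ τ : ι → Submodule F (Fin r → F), IsPartialSpread τ t ∧ ⨆ i, τ i = ⊤ := by
  set U := ⨆ i, σ i
  let e : (Fin r → F) ≃ₗ[F] U := LinearEquiv.ofFinrankEq _ _ (by simp [hr])
  let f : (Fin r → F) →ₗ[F] V := U.subtype ∘ₗ e.toLinearMap
  have hf : Function.Injective f := U.injective_subtype.comp e.injective
  have hrange : LinearMap.range f = U := by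
    rw [LinearMap.range_comp, LinearEquiv.range, Submodule.map_top, range_subtype]
  exact ⟨_, h.comap hf (fun i => hrange ▸ le_iSup σ i), iSup_comap_eq_top hf hrange.symm⟩

theorem IsSunflower.center_le [Nontrivial ι] (h : IsSunflower π C k) (i : ι) : C ≤ π i := by
  obtain ⟨j, hij⟩ := exists_ne i
  exact h.2.2 i j hij.symm ▸ inf_le_left

theorem IsSunflower.isPartialSpread_map_mkQ [Nontrivial ι] [FiniteDimensional F V]
    (h : IsSunflower π C k) (hk : finrank F C + t = k) :
    IsPartialSpread (fun i => (π i).map C.mkQ) t := by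
  have hC := h.center_le
  obtain ⟨hinj, hdim, hint⟩ := h
  refine ⟨fun i j hij => hinj ?_, fun i => ?_, fun i j hij => ?_⟩
  · simpa only [comap_map_mkQ, sup_eq_right.mpr (hC _)] using congrArg (comap C.mkQ) hij
  · have := finrank_map_mkQ_add_finrank (hC i)
    rw [hdim i] at this
    dsimp only
    omega
  · rw [map_mkQ_inf_map_mkQ (hC i) (hC j), hint i j hij, mkQ_map_self]

theorem IsSunflower.map (h : IsSunflower π C k) {f : V →ₗ[F] W} (hf : Function.Injective f) :
    IsSunflower (fun i => (π i).map f) (C.map f) k := by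
  obtain ⟨hinj, hdim, hint⟩ := h
  refine ⟨(map_injective_of_injective hf).comp hinj, fun i => ?_, fun i j hij => ?_⟩
  · rw [finrank_map_of_injective hf, hdim]
  · rw [← map_inf f hf, hint i j hij]

theorem IsPartialSpread.isSunflower_prod_top [FiniteDimensional F V] [FiniteDimensional F W]
    (h : IsPartialSpread σ t) :
    IsSunflower (fun i => (σ i).prod (⊤ : Submodule F W)) ((⊥ : Submodule F V).prod ⊤)
      (t + finrank F W) := by
  obtain ⟨hinj, hdim, hdisj⟩ := h
  refine ⟨fun i j hij => hinj ?_, fun i => ?_, fun i j hij => ?_⟩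
  · simpa only [prod_comap_inl] using congrArg (Submodule.comap (LinearMap.inl F V W)) hij
  · rw [Submodule.finrank_prod, hdim, finrank_top]
  · rw [prod_inf_prod, hdisj i j hij, inf_idem]

theorem IsSunflower.exists_fin_isPartialSpread [Nontrivial ι] [FiniteDimensional F V] {r : ℕ}
    (h : IsSunflower π C k) (hk : finrank F C + t = k)
    (hr : finrank F ↥(⨆ i, π i) = finrank F C + r) :
    ∃ τ : ι → Submodule F (Fin r → F), IsPartialSpread τ t ∧ ⨆ i, τ i = ⊤ := by
  refine (h.isPartialSpread_map_mkQ hk).exists_fin_iSup_eq_top ?_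
  have hC : C ≤ ⨆ i, π i := (h.center_le (Classical.arbitrary ι)).trans (le_iSup π _)
  have := finrank_map_mkQ_add_finrank hC
  rw [← Submodule.map_iSup]
  omega

theorem IsPartialSpread.exists_fin_isSunflower [Nonempty ι] [FiniteDimensional F V] {s d : ℕ}
    (h : IsPartialSpread σ t) (htop : ⨆ i, σ i = ⊤) (hd : finrank F V + s = d) :
    ∃ (π : ι → Submodule F (Fin d → F)) (C : Submodule F (Fin d → F)),
      IsSunflower π C (t + s) ∧ finrank F C = s ∧ finrank F ↥(⨆ i, π i) = d := by
  let e : (V × (Fin s → F)) ≃ₗ[F] (Fin d → F) := LinearEquiv.ofFinrankEq _ _ (by simp [hd])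
  have hπ := (h.isSunflower_prod_top (W := Fin s → F)).map (f := e.toLinearMap) e.injective
  rw [finrank_fin_fun] at hπ
  refine ⟨_, _, hπ, ?_, ?_⟩
  · rw [finrank_map_of_injective e.injective, Submodule.finrank_prod, finrank_bot, finrank_top,
      finrank_fin_fun, zero_add]
  · rw [← Submodule.map_iSup, iSup_prod_top, htop, prod_top, Submodule.map_top,
      LinearEquiv.range, finrank_top, finrank_fin_fun]

end

theorem sunflower_iff_partial_spread_general (F : Type*) [Field F]
    (n k t d : ℕ) (hn : 2 ≤ n) (ht : t ≤ k) (hk : k ≤ d) :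
    (∃ (m : ℕ) (π : Fin n → Submodule F (Fin m → F)) (C : Submodule F (Fin m → F)),
        Function.Injective π ∧
        (∀ i, finrank F ↥(π i) = k) ∧
        finrank F ↥C = k - t ∧
        (∀ i j, i ≠ j → π i ⊓ π j = C) ∧
        finrank F ↥(⨆ i, π i) = d) ↔
      (∃ σ : Fin n → Submodule F (Fin (d - k + t) → F),
        Function.Injective σ ∧
        (∀ i, finrank F ↥(σ i) = t) ∧
        (∀ i j, i ≠ j → σ i ⊓ σ j = ⊥) ∧
        (⨆ i, σ i) = ⊤) := by
  have : Nontrivial (Fin n) := Fin.nontrivial_iff_two_le.mpr hn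
  constructor
  · rintro ⟨m, π, C, hinj, hdim, hC, hint, hsup⟩
    obtain ⟨σ, ⟨hσinj, hσdim, hσint⟩, hσsup⟩ :=
      IsSunflower.exists_fin_isPartialSpread (t := t) (r := d - k + t) ⟨hinj, hdim, hint⟩
        (by omega) (by omega)
    exact ⟨σ, hσinj, hσdim, hσint, hσsup⟩
  · rintro ⟨σ, hinj, hdim, hint, hsup⟩
    obtain ⟨π, C, ⟨hπinj, hπdim, hπint⟩, hC, hπsup⟩ :=
      IsPartialSpread.exists_fin_isSunflower (s := k - t) (d := d) ⟨hinj, hdim, hint⟩ hsup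
        (by rw [finrank_fin_fun]; omega)
    exact ⟨d, π, C, hπinj, fun i => by rw [hπdim i]; omega, hC, hπint, hπsup⟩

theorem sunflower_iff_partial_spread (F : Type*) [Field F] [Fintype F]
    (n k t d : ℕ) (hn : 2 ≤ n) (ht : t ≤ k) (hk : k ≤ d) :
    (∃ (m : ℕ) (π : Fin n → Submodule F (Fin m → F)) (C : Submodule F (Fin m → F)),
        Function.Injective π ∧
        (∀ i, finrank F ↥(π i) = k) ∧
        finrank F ↥C = k - t ∧
        (∀ i j, i ≠ j → π i ⊓ π j = C) ∧
        finrank F ↥(⨆ i, π i) = d) ↔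
      (∃ σ : Fin n → Submodule F (Fin (d - k + t) → F),
        Function.Injective σ ∧
        (∀ i, finrank F ↥(σ i) = t) ∧
        (∀ i j, i ≠ j → σ i ⊓ σ j = ⊥) ∧
        (⨆ i, σ i) = ⊤) :=
  sunflower_iff_partial_spread_general F n k t d hn ht hk
end

section
/- For any (k,k-t)-SCID {π₁,...,πₙ} with n ≥ 2 and t ≥ 1, we have dim S + dim I ≥ 2k, where S is the span of all elements and I the span of all pairwise intersections. -/
open Module

theorem Submodule.finrank_add_finrank_le_of_sup_le_of_inf_le {K V : Type*} [DivisionRing K]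
    [AddCommGroup V] [Module K V] [FiniteDimensional K V] {A B S I : Submodule K V}
    (hS : A ⊔ B ≤ S) (hI : A ⊓ B ≤ I) :
    finrank K A + finrank K B ≤ finrank K S + finrank K I := by
  rw [← Submodule.finrank_sup_add_finrank_inf_eq A B]
  exact add_le_add (Submodule.finrank_mono hS) (Submodule.finrank_mono hI)

theorem scid_lower_bound_general (F V : Type*) [Field F]
    [AddCommGroup V] [Module F V] [FiniteDimensional F V]
    (n k : ℕ) (hn : 2 ≤ n)
    (π : Fin n → Submodule F V)
    (hdim : ∀ i, finrank F ↥(π i) = k) :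
    2 * k ≤ finrank F ↥(⨆ i, π i) +
      finrank F ↥(⨆ i, ⨆ j, ⨆ (_ : i < j), π i ⊓ π j) := by
  let i₀ : Fin n := ⟨0, by omega⟩
  let i₁ : Fin n := ⟨1, hn⟩
  have hlt : i₀ < i₁ := Fin.mk_lt_mk.2 one_pos
  calc 2 * k = finrank F ↥(π i₀) + finrank F ↥(π i₁) := by rw [hdim, hdim, two_mul]
    _ ≤ _ := Submodule.finrank_add_finrank_le_of_sup_le_of_inf_le
      (sup_le (le_iSup π i₀) (le_iSup π i₁))
      (le_iSup₂_of_le i₀ i₁ (le_iSup (fun _ ↦ π i₀ ⊓ π i₁) hlt))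

theorem scid_lower_bound (F V : Type*) [Field F] [Fintype F]
    [AddCommGroup V] [Module F V] [FiniteDimensional F V]
    (n k t : ℕ) (hn : 2 ≤ n) (ht : 1 ≤ t) (htk : t ≤ k)
    (π : Fin n → Submodule F V) (hinj : Function.Injective π)
    (hdim : ∀ i, finrank F ↥(π i) = k)
    (hint : ∀ i j, i ≠ j → finrank F ↥(π i ⊓ π j) = k - t) :
    2 * k ≤ finrank F ↥(⨆ i, π i) +
      finrank F ↥(⨆ i, ⨆ j, ⨆ (_ : i < j), π i ⊓ π j) :=
  scid_lower_bound_general F V n k hn π hdim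
end
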